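/- Let f be a probability density function on ℝⁿ such that f ∈ L^α(ℝⁿ) for each α > 0, and define F(α) = log ∫_{ℝⁿ} f^α. Then for every α > 0, F'(α) = ∫_{ℝⁿ} f_α log f dx = (F(α) - h(X_α))/α, where f_α = f^α / ∫ f^α, X_α has density f_α, and h(X_α) = -∫ f_α log f_α is the entropy of X_α. In particular, F'(1) = -h(X) for X with density f. -/

import Mathlib

open MeasureTheory

/-- The entropy `h(Y) = -∫ g log g` of a random vector `Y` on `ℝⁿ` with density `g`. -/
noncomputable def entropy {n : ℕ} (g : (Fin n → ℝ) → ℝ) : ℝ :=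
  -∫ x, g x * Real.log (g x)

/-- The tilted density `f_α = f^α / ∫ f^α`. -/
noncomputable def tilt {n : ℕ} (f : (Fin n → ℝ) → ℝ) (α : ℝ) : (Fin n → ℝ) → ℝ :=
  fun x => f x ^ α / ∫ y, f y ^ α

/-!
Differentiating under the integral sign gives `(∫ f^α)' = ∫ f^α log f`, hence
`F'(α) = ∫ f^α log f / ∫ f^α = ∫ f_α log f`. The domination needed near `α` comes from
`|t^β log t| ≤ (t^a + t^b) / ε` for `a + ε ≤ β ≤ b - ε`, with `f^a` and `f^b` integrable.
Since `log f_α = α log f - F(α)` wherever `f > 0`, integrating against `f_α` gives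
`-h(X_α) = α F'(α) - F(α)`; at `α = 1` the tilt is `f` itself.
-/

open Real

lemma abs_rpow_mul_log_le {t a b β ε : ℝ} (ht : 0 ≤ t) (hε : 0 < ε) (ha : a + ε ≤ β)
    (hb : β + ε ≤ b) : |t ^ β * log t| ≤ (t ^ a + t ^ b) / ε := by
  have hta : 0 ≤ t ^ a := rpow_nonneg ht a
  have htb : 0 ≤ t ^ b := rpow_nonneg ht b
  rcases ht.eq_or_lt with rfl | ht
  · simp only [log_zero, mul_zero, abs_zero]; positivity
  rw [le_div_iff₀ hε]
  rcases le_total t 1 with ht1 | ht1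
  · have hβa : 0 < β - a := by linarith
    have hsplit : t ^ β * log t = t ^ a * (log t * t ^ (β - a)) := by
      rw [mul_left_comm, ← rpow_add ht]; ring_nf
    have hsmall : |log t * t ^ (β - a)| * ε ≤ 1 := by
      calc |log t * t ^ (β - a)| * ε ≤ 1 / (β - a) * (β - a) := by
            gcongr
            · exact (abs_log_mul_self_rpow_lt t (β - a) ht ht1 hβa).le
            · linarith
        _ = 1 := by field_simp
    calc |t ^ β * log t| * ε = t ^ a * (|log t * t ^ (β - a)| * ε) := by
          rw [hsplit, abs_mul, abs_of_nonneg hta]; ring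
      _ ≤ t ^ a * 1 := by gcongr
      _ ≤ t ^ a + t ^ b := by linarith
  · have hbβ : 0 < b - β := by linarith
    have hpos : 0 ≤ t ^ β * log t := mul_nonneg (rpow_nonneg ht.le β) (log_nonneg ht1)
    have hmerge : t ^ β * t ^ (b - β) = t ^ b := by rw [← rpow_add ht]; ring_nf
    calc |t ^ β * log t| * ε ≤ t ^ β * log t * (b - β) := by
          rw [abs_of_nonneg hpos]; gcongr; linarith
      _ ≤ t ^ β * (t ^ (b - β) / (b - β)) * (b - β) := by
          gcongr; exact log_le_rpow_div ht.le hbβ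
      _ = t ^ b := by rw [← hmerge]; field_simp
      _ ≤ t ^ a + t ^ b := by linarith

lemma hasDerivAt_const_rpow_of_nonneg {t : ℝ} (ht : 0 ≤ t) {s : ℝ} (hs : s ≠ 0) :
    HasDerivAt (fun β : ℝ => t ^ β) (t ^ s * log t) s := by
  rcases ht.eq_or_lt with rfl | ht
  · rw [zero_rpow hs, zero_mul]
    refine (hasDerivAt_const s (0 : ℝ)).congr_of_eventuallyEq ?_
    filter_upwards [isOpen_ne.mem_nhds hs] with β hβ using zero_rpow hβ
  · exact (hasStrictDerivAt_const_rpow ht s).hasDerivAt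

section Moments

variable {X : Type*} [MeasurableSpace X] {μ : Measure X} {f : X → ℝ}

lemma hasDerivAt_integral_rpow (hf : AEMeasurable f μ) (hf_nonneg : 0 ≤ f)
    (hf_int : ∀ s : ℝ, 0 < s → Integrable (fun x => f x ^ s) μ) {s : ℝ} (hs : 0 < s) :
    Integrable (fun x => f x ^ s * log (f x)) μ ∧
      HasDerivAt (fun β => ∫ x, f x ^ β ∂μ) (∫ x, f x ^ s * log (f x) ∂μ) s := by
  have hball : ∀ β ∈ Metric.ball s (s / 2), s / 4 + s / 4 ≤ β ∧ β + s / 4 ≤ 2 * s := by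
    intro β hβ
    rw [Metric.mem_ball, Real.dist_eq, abs_lt] at hβ
    constructor <;> linarith
  refine hasDerivAt_integral_of_dominated_loc_of_deriv_le
    (Metric.ball_mem_nhds s (half_pos hs)) (F := fun β x => f x ^ β)
    (F' := fun β x => f x ^ β * log (f x))
    (bound := fun x => (f x ^ (s / 4) + f x ^ (2 * s)) / (s / 4)) ?_ (hf_int s hs) ?_ ?_ ?_ ?_
  · filter_upwards [Ioi_mem_nhds hs] with β hβ using (hf_int β hβ).aestronglyMeasurable
  · exact ((hf.pow aemeasurable_const).mul hf.log).aestronglyMeasurable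
  · filter_upwards with x β hβ
    exact abs_rpow_mul_log_le (hf_nonneg x) (by positivity) (hball β hβ).1 (hball β hβ).2
  · exact ((hf_int _ (by positivity)).add (hf_int _ (by positivity))).div_const _
  · filter_upwards with x β hβ
    have hβ_pos : 0 < β := by linarith [(hball β hβ).1]
    exact hasDerivAt_const_rpow_of_nonneg (hf_nonneg x) hβ_pos.ne'

lemma integral_rpow_pos (hf_nonneg : 0 ≤ f) (hf : ¬f =ᵐ[μ] 0) {s : ℝ} (hs : 0 < s)
    (hf_int : Integrable (fun x => f x ^ s) μ) : 0 < ∫ x, f x ^ s ∂μ := by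
  have hsupp : Function.support (fun x => f x ^ s) = Function.support f := by
    ext x
    simp only [Function.mem_support, ne_eq]
    rw [rpow_eq_zero (hf_nonneg x) hs.ne']
  rw [integral_pos_iff_support_of_nonneg (fun x => rpow_nonneg (hf_nonneg x) s) hf_int, hsupp,
    pos_iff_ne_zero]
  exact hf

end Moments

section Tilt

variable {n : ℕ} {f : (Fin n → ℝ) → ℝ} {s : ℝ}

lemma integral_tilt_mul_log :
    ∫ x, tilt f s x * log (f x) = (∫ x, f x ^ s * log (f x)) / ∫ x, f x ^ s := by
  rw [← integral_div]
  simp only [tilt, div_mul_eq_mul_div]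

lemma integral_tilt (hZ : ∫ x, f x ^ s ≠ 0) : ∫ x, tilt f s x = 1 := by
  simp only [tilt]
  rw [integral_div, div_self hZ]

lemma tilt_one (hf : ∫ x, f x = 1) : tilt f 1 = f := by
  ext x
  simp only [tilt, rpow_one, hf, div_one]

lemma entropy_tilt (hf_nonneg : 0 ≤ f) (hs : 0 < s) (hZ : 0 < ∫ x, f x ^ s)
    (hf_int : Integrable (fun x => f x ^ s))
    (hf_log_int : Integrable (fun x => f x ^ s * log (f x))) :
    entropy (tilt f s) = log (∫ x, f x ^ s) - s * ∫ x, tilt f s x * log (f x) := by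
  set Z := ∫ x, f x ^ s
  have hpointwise : ∀ x, tilt f s x * log (tilt f s x)
      = s * (tilt f s x * log (f x)) - log Z * tilt f s x := by
    intro x
    rcases (hf_nonneg x).eq_or_lt with hfx | hfx
    · simp [tilt, ← hfx, zero_rpow hs.ne']
    · simp only [tilt]
      rw [log_div (rpow_pos_of_pos hfx s).ne' hZ.ne', log_rpow hfx]
      ring
  have htilt_int : Integrable (tilt f s) := hf_int.div_const Z
  have htilt_log_int : Integrable (fun x => tilt f s x * log (f x)) := by
    simpa only [tilt, div_mul_eq_mul_div] using hf_log_int.div_const Z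
  rw [entropy, integral_congr_ae (ae_of_all _ hpointwise),
    integral_sub (htilt_log_int.const_mul s) (htilt_int.const_mul _), integral_const_mul,
    integral_const_mul, integral_tilt hZ.ne']
  ring

end Tilt

/-- If `f` is a probability density on `ℝⁿ` with `f ∈ L^α(ℝⁿ)` for every `α > 0`, and
`F(α) = log ∫ f^α`, then for every `α > 0`,
`F'(α) = ∫ f_α log f = (F(α) - h(X_α))/α`, where `X_α` has density `f_α = f^α / ∫ f^α`
and `h(X_α) = -∫ f_α log f_α`.  In particular `F'(1) = -h(X)` for `X` with density `f`. -/
theorem deriv_log_moment {n : ℕ} (f : (Fin n → ℝ) → ℝ)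
    (hf_meas : Measurable f) (hf_nonneg : ∀ x, 0 ≤ f x)
    (hf_prob : ∫ x, f x = 1)
    (hf_Lp : ∀ α : ℝ, 0 < α → Integrable (fun x => f x ^ α)) :
    (∀ α : ℝ, 0 < α →
        deriv (fun α : ℝ => Real.log (∫ x, f x ^ α)) α
            = ∫ x, tilt f α x * Real.log (f x) ∧
          deriv (fun α : ℝ => Real.log (∫ x, f x ^ α)) α
            = (Real.log (∫ x, f x ^ α) - entropy (tilt f α)) / α) ∧
      deriv (fun α : ℝ => Real.log (∫ x, f x ^ α)) 1 = -entropy f := by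
  have hf_ne : ¬f =ᵐ[volume] 0 := fun h => by simp [integral_eq_zero_of_ae h] at hf_prob
  have hZ : ∀ α : ℝ, 0 < α → 0 < ∫ x, f x ^ α := fun α hα =>
    integral_rpow_pos hf_nonneg hf_ne hα (hf_Lp α hα)
  have hG := fun α (hα : 0 < α) => hasDerivAt_integral_rpow hf_meas.aemeasurable hf_nonneg hf_Lp hα
  have hF : ∀ α : ℝ, 0 < α →
      deriv (fun α : ℝ => Real.log (∫ x, f x ^ α)) α = ∫ x, tilt f α x * Real.log (f x) :=
    fun α hα => by rw [integral_tilt_mul_log, ((hG α hα).2.log (hZ α hα).ne').deriv]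
  refine ⟨fun α hα => ⟨hF α hα, ?_⟩, ?_⟩
  · rw [hF α hα, entropy_tilt hf_nonneg hα (hZ α hα) (hf_Lp α hα) (hG α hα).1]
    field_simp
    ring
  · rw [hF 1 one_pos, tilt_one hf_prob, entropy, neg_neg]
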